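/- arXiv:math/0112264 — 2 statements merged into one kernel-verified Lean document; each statement's English description precedes it below -/
import Mathlib

section
/- For every linearly ordered abelian group G, the group Aut(G,+,<) of order-preserving additive automorphisms of G is right orderable; that is, Aut(G,+,<) admits a linear order < such that f < g implies f ∘ k < g ∘ k for all f, g, k in Aut(G,+,<). -/
/-! Well-order `G` and compare automorphisms lexicographically by their values: since
post-composition with an order-preserving map preserves this order, it is left-invariant.
Comparing inverses instead turns a left-invariant order into a right-invariant one. -/

/-- The group of order-preserving additive automorphisms of a linearly ordered abelian
group `G`, i.e. `G ≃+o G` under composition. -/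
instance orderAddAutGroup (G : Type*) [AddCommGroup G] [LinearOrder G] [IsOrderedAddMonoid G] : Group (G ≃+o G) where
  mul f g := g.trans f
  one := OrderAddMonoidIso.refl G
  inv f := ⟨(f : G ≃+ G).symm, fun {a b} => f.toOrderIso.symm.le_iff_le⟩
  mul_assoc f g h := rfl
  one_mul f := rfl
  mul_one f := rfl
  inv_mul_cancel f := by
    apply OrderAddMonoidIso.ext
    intro a
    exact (f : G ≃+ G).symm_apply_apply a

theorem StrictMono.toLex_comp_lt_toLex_comp {ι α β : Type*} [LT ι] [Preorder α] [Preorder β]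
    {φ : α → β} (hφ : StrictMono φ) {x y : ι → α} (h : toLex x < toLex y) :
    toLex (φ ∘ x) < toLex (φ ∘ y) := by
  obtain ⟨i, heq, hlt⟩ := h
  exact ⟨i, fun j hj => congrArg φ (heq j hj), hφ hlt⟩

theorem exists_linearOrder_strictMono_comp_left (ι α : Type*) [LinearOrder α] :
    ∃ o : LinearOrder (ι → α),
      ∀ φ : α → α, StrictMono φ → ∀ x y, o.lt x y → o.lt (φ ∘ x) (φ ∘ y) := by
  let : LinearOrder ι := IsWellOrder.linearOrder WellOrderingRel
  have : WellFoundedLT ι := ⟨WellOrderingRel.isWellOrder.wf⟩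
  exact ⟨LinearOrder.lift' toLex toLex.injective, fun φ hφ x y => hφ.toLex_comp_lt_toLex_comp⟩

theorem exists_linearOrder_strictMono_mul_left_of_faithfulSMul {H α : Type*} [Group H]
    [MulAction H α] [FaithfulSMul H α] [LinearOrder α]
    (hmono : ∀ k : H, StrictMono (k • · : α → α)) :
    ∃ o : LinearOrder H, ∀ f g k : H, o.lt f g → o.lt (k * f) (k * g) := by
  obtain ⟨o, ho⟩ := exists_linearOrder_strictMono_comp_left α α
  refine ⟨@LinearOrder.lift' _ _ o (fun f a => f • a) fun f g h => ?_, fun f g k hfg => ?_⟩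
  · exact eq_of_smul_eq_smul fun a => congrFun h a
  · change o.lt (fun a => (k * f) • a) (fun a => (k * g) • a)
    simp only [mul_smul]
    exact ho _ (hmono k) _ _ hfg

theorem exists_linearOrder_strictMono_mul_right_of_mul_left {H : Type*} [Group H]
    (o : LinearOrder H) (ho : ∀ f g k : H, o.lt f g → o.lt (k * f) (k * g)) :
    ∃ o' : LinearOrder H, ∀ f g k : H, o'.lt f g → o'.lt (f * k) (g * k) :=
  ⟨@LinearOrder.lift' _ _ o (·⁻¹) inv_injective, fun f g k hfg => by
    change o.lt (f * k)⁻¹ (g * k)⁻¹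
    simpa only [mul_inv_rev] using ho _ _ k⁻¹ hfg⟩

section OrderAddAut

variable (G : Type*) [AddCommGroup G] [LinearOrder G] [IsOrderedAddMonoid G]

instance orderAddAutMulAction : MulAction (G ≃+o G) G where
  smul f a := f a
  one_smul _ := rfl
  mul_smul _ _ _ := rfl

instance orderAddAut_faithfulSMul : FaithfulSMul (G ≃+o G) G :=
  ⟨fun h => OrderAddMonoidIso.ext h⟩

end OrderAddAut

/-- For every linearly ordered abelian group `G`, the automorphism group `Aut(G,+,<)`
is right orderable. -/
theorem orderAut_rightOrderable (G : Type*) [AddCommGroup G] [LinearOrder G] [IsOrderedAddMonoid G] :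
    ∃ o : LinearOrder (G ≃+o G),
      ∀ f g k : G ≃+o G, o.lt f g → o.lt (f * k) (g * k) := by
  obtain ⟨o, ho⟩ := exists_linearOrder_strictMono_mul_left_of_faithfulSMul (α := G)
    fun k : G ≃+o G => k.strictMono
  exact exists_linearOrder_strictMono_mul_right_of_mul_left o ho
end

section
/- If H is a right-orderable group (H admits a linear order < with h < g implying hk < gk for all h, g, k ∈ H) and R = ℤH is its integral group ring, then every unit of R is trivial: if u ∈ R is a unit, then u = h or u = -h for some h ∈ H (i.e., u = single h 1 or u = -single h 1 in MonoidAlgebra ℤ H). -/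
/-!
Let `u * v = 1` in `R[G]` with `R` a domain. A product `a * b` realised uniquely by support
elements receives the single nonzero contribution `u a * v b`, so it must be `1`. Two distinct
uniquely realised pairs would then share the product `1`, contradicting uniqueness. In a
right-ordered group the smallest and the largest products are uniquely realised, so as soon as
`#supp u * #supp v > 1` there are two such pairs; hence every unit is a monomial `single g r`,
with `r` a unit of `ℤ`, i.e. `±1`.
-/

namespace MonoidAlgebra

open Finset

variable {R G : Type*} [Semiring R] [NoZeroDivisors R]

theorem mul_eq_one_of_uniqueMul_of_mul_eq_one [MulOneClass G] {u v : R[G]} (huv : u * v = 1)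
    {a b : G} (ha : a ∈ u.coeff.support) (hb : b ∈ v.coeff.support)
    (hab : UniqueMul u.coeff.support v.coeff.support a b) : a * b = 1 := by
  by_contra hne
  have hcoeff := coeff_mul_mul_of_uniqueMul hab
  rw [huv, one_def, coeff_single, Finsupp.single_eq_of_ne hne] at hcoeff
  exact mul_ne_zero (Finsupp.mem_support_iff.mp ha) (Finsupp.mem_support_iff.mp hb) hcoeff.symm

theorem card_support_mul_card_support_le_one_of_mul_eq_one [MulOneClass G] [TwoUniqueProds G]
    {u v : R[G]} (huv : u * v = 1) : #u.coeff.support * #v.coeff.support ≤ 1 := by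
  by_contra! hcard
  obtain ⟨p, hp, q, hq, hpq, hp_unique, hq_unique⟩ :=
    TwoUniqueProds.uniqueMul_of_one_lt_card hcard
  rw [mem_product] at hp hq
  have hp_one := mul_eq_one_of_uniqueMul_of_mul_eq_one huv hp.1 hp.2 hp_unique
  have hq_one := mul_eq_one_of_uniqueMul_of_mul_eq_one huv hq.1 hq.2 hq_unique
  obtain ⟨h1, h2⟩ := hp_unique hq.1 hq.2 (hq_one.trans hp_one.symm)
  exact hpq (Prod.ext h1 h2).symm

theorem exists_eq_single_of_mul_eq_one [Nontrivial R] [MulOneClass G] [TwoUniqueProds G]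
    {u v : R[G]} (huv : u * v = 1) : ∃ g r, u = single g r := by
  have hu : 0 < #u.coeff.support := by
    simpa [card_pos, Finsupp.support_nonempty_iff] using left_ne_zero_of_mul_eq_one huv
  have hv : 0 < #v.coeff.support := by
    simpa [card_pos, Finsupp.support_nonempty_iff] using right_ne_zero_of_mul_eq_one huv
  have hcard := card_support_mul_card_support_le_one_of_mul_eq_one huv
  obtain ⟨g, r, -, hug⟩ :=
    Finsupp.card_support_eq_one'.mp (show #u.coeff.support = 1 by nlinarith)
  exact ⟨g, r, coeff_injective hug⟩

theorem exists_eq_single_of_isUnit [Nontrivial R] [Monoid G] [TwoUniqueProds G] {u : R[G]}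
    (hu : IsUnit u) : ∃ g r, IsUnit r ∧ u = single g r := by
  obtain ⟨w, rfl⟩ := hu
  obtain ⟨g, r, hw⟩ := exists_eq_single_of_mul_eq_one w.mul_inv
  obtain ⟨g', r', hw'⟩ := exists_eq_single_of_mul_eq_one w.inv_mul
  have hrr' : single (g * g') (r * r') = single 1 1 := by
    rw [← single_mul_single, ← hw, ← hw', w.mul_inv, one_def]
  have hr'r : single (g' * g) (r' * r) = single 1 1 := by
    rw [← single_mul_single, ← hw, ← hw', w.inv_mul, one_def]
  simp only [single_inj, one_ne_zero, and_false, or_false] at hrr' hr'r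
  exact ⟨g, r, ⟨⟨r, r', hrr'.2, hr'r.2⟩, rfl⟩, hw⟩

end MonoidAlgebra

/-- If `H` is a right-orderable group, then every unit of the integral group ring `ℤH`
is trivial, i.e. of the form `± h` for some `h ∈ H`. -/
theorem monoidAlgebra_units_trivial_of_rightOrderable
    (H : Type*) [Group H]
    (hH : ∃ o : LinearOrder H, ∀ a b c : H, o.lt a b → o.lt (a * c) (b * c))
    (u : MonoidAlgebra ℤ H) (hu : IsUnit u) :
    ∃ h : H, u = MonoidAlgebra.single h 1 ∨ u = -MonoidAlgebra.single h 1 := by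
  obtain ⟨_, ho⟩ := hH
  -- yields `TwoUniqueProds H` through the instance `TwoUniqueProds.of_covariant_left`
  have : MulRightStrictMono H := ⟨fun c _ _ h => ho _ _ c h⟩
  obtain ⟨h, r, hr, rfl⟩ := MonoidAlgebra.exists_eq_single_of_isUnit hu
  rcases Int.isUnit_iff.mp hr with rfl | rfl
  · exact ⟨h, Or.inl rfl⟩
  · exact ⟨h, Or.inr (MonoidAlgebra.single_neg h 1)⟩
end
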